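/- arXiv:1711.10451 — 4 statements merged into one kernel-verified Lean document; each statement's English description precedes it below -/
import Mathlib

section
/- Let F be a field and let b_1, …, b_{kd} ∈ F with m ≤ kd/2. The (kd−m) × (m+1) matrix M with entries M_{ij} = b_{i+j−1} has rank at most m if and only if there exist an integer m' ≤ m, a polynomial h_1(T) ∈ F[T] of degree < m', and a monic polynomial h_2(T) ∈ F[T] of degree m', such that the formal Laurent series ∑_{r=1}^{kd} b_r T^{−r} − h_1(T)/h_2(T) has all terms of degree at most −kd−1+m−m' (i.e., equals O(T^{−kd−1+m−m'})). -/
/-!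
Write `T = x⁻¹` and `B = ∑ b_r x^r`. For a nonzero polynomial `h₂`, the series `h₂(T)` has order
`-deg h₂`, so `B - h₁(T)/h₂(T)` vanishes below `N + deg h₂` iff `h₂(T) B - h₁(T)` vanishes below
`N`. The coefficients of `h₂(T) B` at the exponents `1, …, kd - m` are the entries of `M` applied
to the coefficient vector of `h₂`, while its part of nonpositive exponent is a polynomial in `T`
of degree `< deg h₂`, which can be taken as `h₁`. So the approximations correspond to kernel
vectors of `M` normalized to be monic, and `M` has a nonzero kernel vector iff `rank M ≤ m`.
-/

open Polynomial Finset
open HahnSeries (single)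
open scoped Matrix

theorem HahnSeries.forall_lt_coeff_eq_zero_iff {Γ R : Type*} [LinearOrder Γ] [Zero R]
    (x : HahnSeries Γ R) (g : Γ) : (∀ j < g, x.coeff j = 0) ↔ (g : WithTop Γ) ≤ x.orderTop := by
  simp [HahnSeries.le_orderTop_iff_forall]

section CommRing

variable {R : Type*} [CommRing R]

theorem coeff_aeval_single_neg_one_mul (p : R[X]) (S : LaurentSeries R) {K : ℕ}
    (hK : p.natDegree < K) (e : ℤ) :
    (aeval (single (-1 : ℤ) (1 : R)) p * S).coeff e
      = ∑ i ∈ range K, p.coeff i * S.coeff (e + i) := by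
  rw [aeval_eq_sum_range' hK, Finset.sum_mul, HahnSeries.coeff_sum]
  refine Finset.sum_congr rfl fun i _ => ?_
  rw [HahnSeries.single_pow, Algebra.smul_def, mul_assoc]
  simp [HahnSeries.algebraMap_apply', HahnSeries.coeff_single_mul]

theorem coeff_aeval_single_neg_one_neg_natCast (p : R[X]) (i : ℕ) :
    (aeval (single (-1 : ℤ) (1 : R)) p).coeff (-i) = p.coeff i := by
  have hK : p.natDegree < max p.natDegree i + 1 := by omega
  have hi : i ∈ range (max p.natDegree i + 1) := by simp
  rw [← mul_one (aeval _ p), coeff_aeval_single_neg_one_mul p 1 hK,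
    Finset.sum_eq_single_of_mem i hi fun j _ hj => ?_]
  · simp
  · rw [HahnSeries.coeff_one, if_neg (by omega), mul_zero]

theorem coeff_aeval_single_neg_one_of_pos (p : R[X]) {e : ℤ} (he : 0 < e) :
    (aeval (single (-1 : ℤ) (1 : R)) p).coeff e = 0 := by
  rw [← mul_one (aeval _ p), coeff_aeval_single_neg_one_mul p 1 p.natDegree.lt_succ_self]
  exact Finset.sum_eq_zero fun i _ => by rw [HahnSeries.coeff_one, if_neg (by omega), mul_zero]

theorem exists_coeff_sub_aeval_single_neg_one_eq_zero_iff {S : LaurentSeries R} {m' : ℕ}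
    (hS : ∀ e ≤ -(m' : ℤ), S.coeff e = 0) (N : ℤ) :
    (∃ h₁ : R[X], h₁.degree < m' ∧
        ∀ e < N, (S - aeval (single (-1 : ℤ) (1 : R)) h₁).coeff e = 0) ↔
      ∀ e, 0 < e → e < N → S.coeff e = 0 := by
  classical
  constructor
  · rintro ⟨h₁, -, h⟩ e he heN
    simpa [coeff_aeval_single_neg_one_of_pos _ he] using h e heN
  · intro h
    refine ⟨ofFn m' fun i => S.coeff (-i), ofFn_degree_lt _, fun e heN => ?_⟩
    rw [HahnSeries.coeff_sub, sub_eq_zero]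
    rcases lt_or_ge 0 e with he | he
    · rw [coeff_aeval_single_neg_one_of_pos _ he, h e he heN]
    obtain ⟨i, rfl⟩ : ∃ i : ℕ, e = -i := ⟨(-e).toNat, by omega⟩
    rw [coeff_aeval_single_neg_one_neg_natCast]
    rcases lt_or_ge i m' with hi | hi
    · rw [ofFn_coeff_eq_val_of_lt _ hi]
    · rw [ofFn_coeff_eq_zero_of_ge _ hi, hS _ (by omega)]

theorem coeff_sum_smul_single_one_pow (s : Finset ℕ) (b : ℕ → R) (e : ℤ) :
    (∑ r ∈ s, b r • single (1 : ℤ) (1 : R) ^ r).coeff e =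
      ∑ r ∈ s, if (r : ℤ) = e then b r else 0 := by
  rw [HahnSeries.coeff_sum]
  refine Finset.sum_congr rfl fun r _ => ?_
  simp [HahnSeries.single_pow, HahnSeries.coeff_single, eq_comm]

theorem coeff_sum_smul_single_one_pow_of_nonpos {s : Finset ℕ} (hs : 0 ∉ s) (b : ℕ → R) {e : ℤ}
    (he : e ≤ 0) : (∑ r ∈ s, b r • single (1 : ℤ) (1 : R) ^ r).coeff e = 0 := by
  rw [coeff_sum_smul_single_one_pow]
  refine Finset.sum_eq_zero fun r hr => if_neg fun hre => hs ?_
  rwa [show r = 0 by omega] at hr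

end CommRing

section Field

variable {F : Type*} [Field F]

theorem orderTop_aeval_single_neg_one {p : F[X]} (hp : p ≠ 0) :
    (aeval (single (-1 : ℤ) (1 : F)) p).orderTop = (-p.natDegree : ℤ) := by
  refine le_antisymm (HahnSeries.orderTop_le_of_coeff_ne_zero ?_)
    (HahnSeries.le_orderTop_iff_forall.mpr fun j hj => ?_)
  · rw [coeff_aeval_single_neg_one_neg_natCast]; simpa using hp
  · have hj' : j < -(p.natDegree : ℤ) := by exact_mod_cast hj
    obtain ⟨i, rfl⟩ : ∃ i : ℕ, j = -i := ⟨(-j).toNat, by omega⟩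
    rw [coeff_aeval_single_neg_one_neg_natCast, coeff_eq_zero_of_natDegree_lt (by omega)]

theorem coeff_eq_zero_iff_coeff_aeval_single_neg_one_mul_eq_zero {p : F[X]} (hp : p ≠ 0)
    (D : LaurentSeries F) (N : ℤ) :
    (∀ j < N + p.natDegree, D.coeff j = 0) ↔
      ∀ j < N, (aeval (single (-1 : ℤ) (1 : F)) p * D).coeff j = 0 := by
  simp only [HahnSeries.forall_lt_coeff_eq_zero_iff, HahnSeries.orderTop_mul,
    orderTop_aeval_single_neg_one hp]
  induction D.orderTop with
  | top => simp
  | coe t => norm_cast; omega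

theorem coeff_div_aeval_single_neg_one_eq_zero_iff {S : LaurentSeries F}
    (hS : ∀ e ≤ 0, S.coeff e = 0) {h₂ : F[X]} (hh₂ : h₂ ≠ 0) (N : ℤ) :
    (∃ h₁ : F[X], h₁.degree < h₂.natDegree ∧ ∀ j < N + h₂.natDegree,
        (S - aeval (single (-1 : ℤ) (1 : F)) h₁ / aeval (single (-1 : ℤ) (1 : F)) h₂).coeff j = 0) ↔
      ∀ e, 0 < e → e < N → (aeval (single (-1 : ℤ) (1 : F)) h₂ * S).coeff e = 0 := by
  set T : LaurentSeries F := single (-1 : ℤ) 1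
  have hT : aeval T h₂ ≠ 0 := by
    rw [← HahnSeries.orderTop_ne_top, orderTop_aeval_single_neg_one hh₂]
    exact WithTop.coe_ne_top
  have hpoles : ∀ e ≤ -(h₂.natDegree : ℤ), (aeval T h₂ * S).coeff e = 0 := fun e he => by
    rw [coeff_aeval_single_neg_one_mul h₂ S h₂.natDegree.lt_succ_self]
    exact Finset.sum_eq_zero fun i hi => by
      rw [hS _ (by simp at hi; omega), mul_zero]
  rw [← exists_coeff_sub_aeval_single_neg_one_eq_zero_iff hpoles]
  refine exists_congr fun h₁ => and_congr_right fun _ => ?_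
  rw [coeff_eq_zero_iff_coeff_aeval_single_neg_one_mul_eq_zero hh₂, mul_sub,
    mul_div_cancel₀ _ hT]

theorem Matrix.rank_lt_card_iff_exists_mulVec_eq_zero {m n : Type*} [Fintype m] [Fintype n]
    (M : Matrix m n F) : M.rank < Fintype.card n ↔ ∃ v ≠ 0, M *ᵥ v = 0 := by
  have hdim := LinearMap.finrank_range_add_finrank_ker M.mulVecLin
  rw [Module.finrank_fintype_fun_eq_card] at hdim
  have hker : LinearMap.ker M.mulVecLin ≠ ⊥ ↔ ∃ v ≠ 0, M *ᵥ v = 0 := by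
    simp [Matrix.ker_mulVecLin_eq_bot_iff, and_comm]
  rw [Matrix.rank, ← hker, Ne, ← Submodule.finrank_eq_zero]
  omega

theorem hankel_mulVec_toFn (b : ℕ → F) {n m : ℕ} {q : F[X]} (hq : q.natDegree ≤ m)
    (i : Fin (n - m)) :
    (Matrix.of (fun (i : Fin (n - m)) (j : Fin (m + 1)) => b (i + j + 1)) *ᵥ toFn (m + 1) q) i =
      (aeval (single (-1 : ℤ) (1 : F)) q * ∑ r ∈ Icc 1 n, b r • single (1 : ℤ) (1 : F) ^ r).coeff
        (i + 1) := by
  rw [coeff_aeval_single_neg_one_mul q _ (Nat.lt_succ_of_le hq), ← Fin.sum_univ_eq_sum_range,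
    Matrix.mulVec, dotProduct]
  refine Finset.sum_congr rfl fun j _ => ?_
  have hj := j.isLt
  have hi := i.isLt
  have hr : (i + 1 + j : ℤ) = ((i + j + 1 : ℕ) : ℤ) := by push_cast; ring
  rw [coeff_sum_smul_single_one_pow, hr]
  simp only [Nat.cast_inj]
  rw [Finset.sum_ite_eq_of_mem' _ _ _ (by simp; omega), mul_comm]
  rfl

theorem hankel_mulVec_toFn_eq_zero_iff (b : ℕ → F) {n m : ℕ} {q : F[X]} (hq : q.natDegree ≤ m) :
    Matrix.of (fun (i : Fin (n - m)) (j : Fin (m + 1)) => b (i + j + 1)) *ᵥ toFn (m + 1) q = 0 ↔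
      ∀ e : ℤ, 0 < e → e < n + 1 - m →
        (aeval (single (-1 : ℤ) (1 : F)) q * ∑ r ∈ Icc 1 n, b r • single (1 : ℤ) (1 : F) ^ r).coeff
          e = 0 := by
  simp only [funext_iff, Pi.zero_apply, hankel_mulVec_toFn b hq]
  refine ⟨fun h e he₀ heN => ?_, fun h i => h _ (by omega) (by have := i.isLt; omega)⟩
  simpa [show ((e.toNat - 1 : ℕ) : ℤ) + 1 = e by omega] using h ⟨e.toNat - 1, by omega⟩

theorem exists_ne_zero_hankel_mulVec_eq_zero_iff (b : ℕ → F) (n m : ℕ) :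
    (∃ v ≠ 0, Matrix.of (fun (i : Fin (n - m)) (j : Fin (m + 1)) => b (i + j + 1)) *ᵥ v = 0) ↔
      ∃ q : F[X], q.Monic ∧ q.natDegree ≤ m ∧ ∀ e : ℤ, 0 < e → e < n + 1 - m →
        (aeval (single (-1 : ℤ) (1 : F)) q * ∑ r ∈ Icc 1 n, b r • single (1 : ℤ) (1 : F) ^ r).coeff
          e = 0 := by
  classical
  constructor
  · rintro ⟨v, hv, hMv⟩
    set p := ofFn (m + 1) v
    have hp : p.leadingCoeff ≠ 0 :=
      leadingCoeff_ne_zero.mpr ((injective_ofFn (m + 1)).ne_iff' (map_zero _) |>.mpr hv)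
    have hqm : (C p.leadingCoeff⁻¹ * p).natDegree ≤ m := (natDegree_C_mul (inv_ne_zero hp)).trans_le
      (Nat.le_of_lt_succ (ofFn_natDegree_lt (by omega) v))
    refine ⟨C p.leadingCoeff⁻¹ * p,
      monic_C_mul_of_mul_leadingCoeff_eq_one (inv_mul_cancel₀ hp), hqm, ?_⟩
    rw [← hankel_mulVec_toFn_eq_zero_iff b hqm, ← smul_eq_C_mul, map_smul, toFn_comp_ofFn_eq_id,
      Matrix.mulVec_smul, hMv, smul_zero]
  · rintro ⟨q, hq, hqm, hqB⟩
    refine ⟨toFn (m + 1) q, fun h => ?_, (hankel_mulVec_toFn_eq_zero_iff b hqm).mpr hqB⟩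
    have := congrFun h ⟨q.natDegree, by omega⟩
    simp_all [toFn]

end Field

theorem stmt_1_general (F : Type) [Field F] (k d m : ℕ)
    (b : ℕ → F) (x : LaurentSeries F) (hx : x = HahnSeries.single (1 : ℤ) (1 : F)) :
    Matrix.rank (Matrix.of fun (i : Fin (k * d - m)) (j : Fin (m + 1)) =>
        b (i.1 + j.1 + 1)) ≤ m
      ↔ ∃ (m' : ℕ) (h1 h2 : Polynomial F), m' ≤ m ∧
          h1.degree < (m' : WithBot ℕ) ∧ h2.Monic ∧ h2.natDegree = m' ∧
          ∀ j : ℤ, j < (k : ℤ) * d + 1 - m + m' →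
            ((∑ r ∈ Finset.Icc 1 (k * d), b r • x ^ r)
              - Polynomial.aeval x⁻¹ h1 / Polynomial.aeval x⁻¹ h2).coeff j = 0 := by
  subst hx
  have hrank := Matrix.rank_lt_card_iff_exists_mulVec_eq_zero
    (Matrix.of fun (i : Fin (k * d - m)) (j : Fin (m + 1)) => b (i.1 + j.1 + 1))
  rw [Fintype.card_fin, Nat.lt_succ_iff] at hrank
  rw [hrank, exists_ne_zero_hankel_mulVec_eq_zero_iff, Nat.cast_mul, HahnSeries.inv_single,
    inv_one]
  have hB (e : ℤ) (he : e ≤ 0) := coeff_sum_smul_single_one_pow_of_nonpos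
    (s := Icc 1 (k * d)) (by simp) b he
  constructor
  · rintro ⟨q, hq, hqm, hqB⟩
    obtain ⟨h₁, hh₁, hsmall⟩ := (coeff_div_aeval_single_neg_one_eq_zero_iff hB hq.ne_zero _).mpr hqB
    exact ⟨q.natDegree, h₁, q, hqm, hh₁, hq, rfl, hsmall⟩
  · rintro ⟨m', h₁, h₂, hm', hh₁, hh₂, rfl, hsmall⟩
    exact ⟨h₂, hh₂, hm', (coeff_div_aeval_single_neg_one_eq_zero_iff hB hh₂.ne_zero _).mp
      ⟨h₁, hh₁, hsmall⟩⟩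

/-- Lemma 2.3(4): with m ≤ kd/2, the (kd−m)×(m+1) matrix M, M_{ij} = b_{i+j−1}
(1-based; below 0-based indices, so M i j = b_{i+j+1}), has rank ≤ m if and only if there
exist m' ≤ m, a polynomial h₁ of degree < m' and a monic polynomial h₂ of degree m' with
∑_{r=1}^{kd} b_r T^{−r} = h₁(T)/h₂(T) + O(T^{−kd−1+m−m'}).  Laurent series in T^{−1} are
modelled in the field `LaurentSeries F` whose variable `x = HahnSeries.single 1 1`
represents T^{−1} (so T = x⁻¹, a term T^e corresponds to exponent −e of x, and being
O(T^{−kd−1+m−m'}) means the coefficient at every x-exponent j < kd+1−m+m' vanishes). -/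
theorem stmt_1 (F : Type) [Field F] (k d m : ℕ) (hk : 1 ≤ k) (hd : 1 ≤ d)
    (hm : 2 * m ≤ k * d)
    (b : ℕ → F) (x : LaurentSeries F) (hx : x = HahnSeries.single (1 : ℤ) (1 : F)) :
    Matrix.rank (Matrix.of fun (i : Fin (k * d - m)) (j : Fin (m + 1)) =>
        b (i.1 + j.1 + 1)) ≤ m
      ↔ ∃ (m' : ℕ) (h1 h2 : Polynomial F), m' ≤ m ∧
          h1.degree < (m' : WithBot ℕ) ∧ h2.Monic ∧ h2.natDegree = m' ∧
          ∀ j : ℤ, j < (k : ℤ) * d + 1 - m + m' →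
            ((∑ r ∈ Finset.Icc 1 (k * d), b r • x ^ r)
              - Polynomial.aeval x⁻¹ h1 / Polynomial.aeval x⁻¹ h2).coeff j = 0 :=
  stmt_1_general F k d m b x hx
end

section
/- Let F be a field and m a positive integer. The map sending a pair (h_1, h_2) of coprime polynomials over F, with h_2 monic of degree m and deg h_1 < m, to the tuple of the first kd coefficients (b_1, …, b_{kd}) of the Laurent expansion h_1(T)/h_2(T) = ∑_{r ≥ 1} b_r T^{−r}, is injective whenever m ≤ kd/2. -/
open Polynomial HahnSeries

/-! The Laurent variable `single (-1) 1` plays the role of `T`, so a polynomial `q` becomes a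
series supported on the exponents `0, -1, …, -deg q`, of order `-deg q`. If two proper fractions
`p/q` and `p'/q'` differ, their difference `(p q' - p' q) / (q q')` has order
`deg (q q') - deg (p q' - p' q)`, which lies between `1` and `deg q + deg q'`; so the two
expansions already differ at one of the first `deg q + deg q'` coefficients. Coprimality and
monicity then recover the pair from the cross-multiplied identity `p q' = p' q`. -/

theorem HahnSeries.order_div {Γ R : Type*} [AddCommGroup Γ] [LinearOrder Γ]
    [IsOrderedAddMonoid Γ] [Field R] {a b : HahnSeries Γ R} (ha : a ≠ 0) (hb : b ≠ 0) :
    (a / b).order = a.order - b.order := by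
  have h := (addVal Γ R).map_div (x := a) (y := b)
  rw [addVal_apply_of_ne (div_ne_zero ha hb), addVal_apply_of_ne ha,
    addVal_apply_of_ne hb] at h
  exact_mod_cast h

namespace LaurentSeries

section CommSemiring

variable {R : Type*} [CommSemiring R]

theorem aeval_single_neg_one_monomial (n : ℕ) (a : R) :
    aeval (single (-1 : ℤ) (1 : R)) (monomial n a) = single (-(n : ℤ)) a := by
  rw [aeval_monomial, HahnSeries.algebraMap_apply', PowerSeries.algebraMap_apply,
    Algebra.algebraMap_self, RingHom.id_apply, ofPowerSeries_C, C_apply, single_pow, one_pow,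
    single_mul_single, zero_add, mul_one, nsmul_eq_mul, mul_neg, mul_one]

theorem coeff_aeval_single_neg_one (q : R[X]) (z : ℤ) :
    (aeval (single (-1 : ℤ) (1 : R)) q).coeff z = if z ≤ 0 then q.coeff (-z).toNat else 0 := by
  induction q using Polynomial.induction_on' with
  | add p q hp hq =>
    simp only [map_add, HahnSeries.coeff_add, hp, hq, Polynomial.coeff_add]
    split_ifs <;> simp
  | monomial n a =>
    rw [aeval_single_neg_one_monomial, HahnSeries.coeff_single, Polynomial.coeff_monomial]
    by_cases hz : z = -(n : ℤ)
    · simp [hz]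
    · rw [if_neg hz]
      split_ifs <;> first | rfl | omega

theorem coeff_aeval_single_neg_one_neg_natDegree (q : R[X]) :
    (aeval (single (-1 : ℤ) (1 : R)) q).coeff (-(q.natDegree : ℤ)) = q.leadingCoeff := by
  rw [coeff_aeval_single_neg_one, if_pos (by omega), neg_neg, Int.toNat_natCast,
    Polynomial.leadingCoeff]

theorem aeval_single_neg_one_ne_zero {q : R[X]} (hq : q ≠ 0) :
    aeval (single (-1 : ℤ) (1 : R)) q ≠ 0 :=
  ne_zero_of_coeff_ne_zero <| by
    rwa [coeff_aeval_single_neg_one_neg_natDegree, Ne, Polynomial.leadingCoeff_eq_zero]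

theorem order_aeval_single_neg_one {q : R[X]} (hq : q ≠ 0) :
    (aeval (single (-1 : ℤ) (1 : R)) q).order = -(q.natDegree : ℤ) := by
  refine le_antisymm (order_le_of_coeff_ne_zero ?_) ?_
  · rwa [coeff_aeval_single_neg_one_neg_natDegree, Ne, Polynomial.leadingCoeff_eq_zero]
  · refine (le_order_iff_forall (aeval_single_neg_one_ne_zero hq)).mpr fun j hj => ?_
    rw [coeff_aeval_single_neg_one, if_pos (by omega)]
    exact coeff_eq_zero_of_natDegree_lt (by omega)

end CommSemiring

section Field

variable {F : Type*} [Field F]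

theorem order_aeval_div_aeval {p q : F[X]} (hp : p ≠ 0) (hq : q ≠ 0) :
    (aeval (single (-1 : ℤ) (1 : F)) p / aeval (single (-1 : ℤ) (1 : F)) q).order
      = q.natDegree - p.natDegree := by
  rw [order_div (aeval_single_neg_one_ne_zero hp) (aeval_single_neg_one_ne_zero hq),
    order_aeval_single_neg_one hp, order_aeval_single_neg_one hq]
  ring

theorem degree_mul_sub_mul_lt {p q p' q' : F[X]} (hp : p.degree < q.degree)
    (hp' : p'.degree < q'.degree) : (p * q' - p' * q).degree < (q * q').degree := by
  have hq : q ≠ 0 := ne_zero_of_degree_gt hp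
  have hq' : q' ≠ 0 := ne_zero_of_degree_gt hp'
  refine (degree_sub_le _ _).trans_lt (max_lt ?_ ?_)
  · rw [degree_mul, degree_mul]
    exact WithBot.add_lt_add_right (degree_ne_bot.mpr hq') hp
  · rw [degree_mul, degree_mul, add_comm]
    exact WithBot.add_lt_add_left (degree_ne_bot.mpr hq) hp'

theorem mul_eq_mul_of_coeff_aeval_div_eq {p q p' q' : F[X]} {N : ℕ}
    (hp : p.degree < q.degree) (hp' : p'.degree < q'.degree)
    (hN : q.natDegree + q'.natDegree ≤ N)
    (hcoeff : ∀ r : ℕ, 1 ≤ r → r ≤ N →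
      (aeval (single (-1 : ℤ) (1 : F)) p / aeval (single (-1 : ℤ) (1 : F)) q).coeff (r : ℤ)
        = (aeval (single (-1 : ℤ) (1 : F)) p' / aeval (single (-1 : ℤ) (1 : F)) q').coeff
            (r : ℤ)) :
    p * q' = p' * q := by
  set A : F[X] →ₐ[F] LaurentSeries F := aeval (single (-1 : ℤ) (1 : F))
  have hq : q ≠ 0 := ne_zero_of_degree_gt hp
  have hq' : q' ≠ 0 := ne_zero_of_degree_gt hp'
  by_contra hne
  set s := p * q' - p' * q
  have hs : s ≠ 0 := sub_ne_zero.mpr hne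
  have hsdeg : s.natDegree < (q * q').natDegree :=
    natDegree_lt_natDegree hs (degree_mul_sub_mul_lt hp hp')
  rw [natDegree_mul hq hq'] at hsdeg
  have hdiff : A p / A q - A p' / A q' = A s / A (q * q') := by
    rw [div_sub_div _ _ (aeval_single_neg_one_ne_zero hq) (aeval_single_neg_one_ne_zero hq')]
    simp only [s, map_sub, map_mul]
    ring
  set r := q.natDegree + q'.natDegree - s.natDegree
  have hord : (A s / A (q * q')).order = r := by
    rw [order_aeval_div_aeval hs (mul_ne_zero hq hq'), natDegree_mul hq hq']
    omega
  have hvanish : (A s / A (q * q')).coeff r = 0 := by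
    rw [← hdiff, HahnSeries.coeff_sub, hcoeff r (by omega) (by omega), sub_self]
  rw [← hord, coeff_order_eq_zero] at hvanish
  exact div_ne_zero (aeval_single_neg_one_ne_zero hs)
    (aeval_single_neg_one_ne_zero (mul_ne_zero hq hq')) hvanish

end Field

end LaurentSeries

theorem Polynomial.eq_and_eq_of_mul_eq_mul_of_isCoprime {R : Type*} [CommRing R] [IsDomain R]
    {p q p' q' : R[X]} (hq : q.Monic) (hq' : q'.Monic) (hcop : IsCoprime p q)
    (hcop' : IsCoprime p' q') (h : p * q' = p' * q) : p = p' ∧ q = q' := by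
  have hdvd : q ∣ q' := hcop.symm.dvd_of_dvd_mul_left ⟨p', by rw [h, mul_comm]⟩
  have hdvd' : q' ∣ q := hcop'.symm.dvd_of_dvd_mul_left ⟨p, by rw [← h, mul_comm]⟩
  have hqq' : q = q' := eq_of_monic_of_associated hq hq' (associated_of_dvd_dvd hdvd hdvd')
  subst hqq'
  exact ⟨mul_right_cancel₀ hq.ne_zero h, rfl⟩

theorem stmt_3_general (F : Type) [Field F] (k d m : ℕ) (hkd : 2 * m ≤ k * d)
    (x : LaurentSeries F) (hx : x = HahnSeries.single (1 : ℤ) (1 : F))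
    (h1 h2 h1' h2' : Polynomial F)
    (hmon : h2.Monic) (hdeg2 : h2.natDegree = m) (hdeg1 : h1.degree < (m : WithBot ℕ))
    (hcop : IsCoprime h1 h2)
    (hmon' : h2'.Monic) (hdeg2' : h2'.natDegree = m) (hdeg1' : h1'.degree < (m : WithBot ℕ))
    (hcop' : IsCoprime h1' h2')
    (hcoeff : ∀ r : ℕ, 1 ≤ r → r ≤ k * d →
      (Polynomial.aeval x⁻¹ h1 / Polynomial.aeval x⁻¹ h2).coeff (r : ℤ)
        = (Polynomial.aeval x⁻¹ h1' / Polynomial.aeval x⁻¹ h2').coeff (r : ℤ)) :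
    h1 = h1' ∧ h2 = h2' := by
  rw [hx, inv_single, inv_one] at hcoeff
  have hdeg : h2.degree = m := by rw [degree_eq_natDegree hmon.ne_zero, hdeg2]
  have hdeg' : h2'.degree = m := by rw [degree_eq_natDegree hmon'.ne_zero, hdeg2']
  refine eq_and_eq_of_mul_eq_mul_of_isCoprime hmon hmon' hcop hcop' ?_
  exact LaurentSeries.mul_eq_mul_of_coeff_aeval_div_eq (hdeg ▸ hdeg1) (hdeg' ▸ hdeg1')
    (by omega) hcoeff

/-- for m ≤ kd/2, the map sending a pair (h₁,h₂) of coprime polynomials,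
with h₂ monic of degree m and deg h₁ < m, to the first kd coefficients (b_1,…,b_{kd}) of
the expansion h₁(T)/h₂(T) = ∑_{r≥1} b_r T^{−r}, is injective.  The expansion is taken in
`LaurentSeries F`, whose variable `x = HahnSeries.single 1 1` represents T^{−1}; so b_r is
the coefficient of the expansion of h₁(x⁻¹)/h₂(x⁻¹) at the x-exponent r. -/
theorem stmt_3 (F : Type) [Field F] (k d m : ℕ) (hk : 1 ≤ k) (hd : 1 ≤ d)
    (hm : 1 ≤ m) (hkd : 2 * m ≤ k * d)
    (x : LaurentSeries F) (hx : x = HahnSeries.single (1 : ℤ) (1 : F))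
    (h1 h2 h1' h2' : Polynomial F)
    (hmon : h2.Monic) (hdeg2 : h2.natDegree = m) (hdeg1 : h1.degree < (m : WithBot ℕ))
    (hcop : IsCoprime h1 h2)
    (hmon' : h2'.Monic) (hdeg2' : h2'.natDegree = m) (hdeg1' : h1'.degree < (m : WithBot ℕ))
    (hcop' : IsCoprime h1' h2')
    (hcoeff : ∀ r : ℕ, 1 ≤ r → r ≤ k * d →
      (Polynomial.aeval x⁻¹ h1 / Polynomial.aeval x⁻¹ h2).coeff (r : ℤ)
        = (Polynomial.aeval x⁻¹ h1' / Polynomial.aeval x⁻¹ h2').coeff (r : ℤ)) :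
    h1 = h1' ∧ h2 = h2' :=
  stmt_3_general F k d m hkd x hx h1 h2 h1' h2' hmon hdeg2 hdeg1 hcop hmon' hdeg2' hdeg1' hcop'
    hcoeff
end

section
/- Let n ≥ 4 and d ≥ 1 be integers, and suppose E is a (first-quadrant-type) spectral sequence with differentials d_r : E_r^{m,s} → E_r^{m+r, s−r+1}, whose E_1 page vanishes except when (m,s) = (0,0) or when 1 ≤ m ≤ d and −m(n−1)+1 ≤ s ≤ −m(n−2), and whose differentials vanish on all odd pages r. Then every differential d_r^{m,s} with m + s > −2(n−2)(n−3) (on any page r ≥ 1) is zero; consequently E_∞^{m,s} = E_1^{m,s} whenever m + s > 1 − 2(n−2)(n−3). -/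
/-- For a spectral sequence with differentials d_r : E_r^{m,s} → E_r^{m+r,s-r+1}
whose first page is supported at (0,0) and in the region 1 ≤ m ≤ d,
−m(n−1)+1 ≤ s ≤ −m(n−2), and whose odd-page differentials vanish, every differential
d_r^{m,s} with m + s > −2(n−2)(n−3) vanishes (so E_∞^{m,s} = E_1^{m,s} for
m + s > 1 − 2(n−2)(n−3)).  The spectral sequence is modelled abstractly: `E1ne m s` means
E_1^{m,s} ≠ 0 and `dne r m s` means the differential d_r^{m,s} is non-zero; since every
page is a subquotient of the first page, a non-zero differential d_r^{m,s} forces both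
E_1^{m,s} ≠ 0 and E_1^{m+r,s−r+1} ≠ 0. -/
theorem stmt_8 (n d : ℤ) (hn : 4 ≤ n) (hd : 1 ≤ d)
    (E1ne : ℤ → ℤ → Prop) (dne : ℕ → ℤ → ℤ → Prop)
    (hsupp : ∀ m s : ℤ, E1ne m s →
      (m = 0 ∧ s = 0) ∨ (1 ≤ m ∧ m ≤ d ∧ -m * (n - 1) + 1 ≤ s ∧ s ≤ -m * (n - 2)))
    (hodd : ∀ (r : ℕ) (m s : ℤ), Odd r → ¬ dne r m s)
    (hsubquotient : ∀ (r : ℕ) (m s : ℤ), dne r m s →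
      E1ne m s ∧ E1ne (m + r) (s - r + 1)) :
    ∀ (r : ℕ) (m s : ℤ), 1 ≤ r → -2 * (n - 2) * (n - 3) < m + s → ¬ dne r m s := by
  intro r m s hr hlt h
  rcases Nat.even_or_odd r with heven | hoddr
  · obtain ⟨hsrc, htgt⟩ := hsubquotient r m s h
    have hR : (2 : ℤ) ≤ (r : ℤ) := by
      obtain ⟨k, hk⟩ := heven
      omega
    rcases hsupp _ _ hsrc with ⟨hm0, hs0⟩ | ⟨hm1, _, hsl, hsu⟩
    · rcases hsupp _ _ htgt with ⟨hm0', _⟩ | ⟨_, _, _, hsu'⟩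
      · omega
      · subst hm0 hs0; nlinarith
    · rcases hsupp _ _ htgt with ⟨hm0', _⟩ | ⟨_, _, hsl', hsu'⟩
      · omega
      · have hm : (r : ℤ) * (n - 3) + 2 ≤ m := by nlinarith
        have hm2 : 2 * n - 4 ≤ m := by
          nlinarith [mul_nonneg (by linarith : (0:ℤ) ≤ (r:ℤ) - 2) (by linarith : (0:ℤ) ≤ n - 3)]
        nlinarith [mul_nonneg (by linarith : (0:ℤ) ≤ m - (2*n - 4)) (by linarith : (0:ℤ) ≤ n - 3)]
  · exact hodd r m s hoddr h
end

section
/- Let F be a field of characteristic 0 or > k, f ∈ F[x_1,…,x_n] of degree k ≥ 2 whose degree-k part f_0 satisfies ∂f_0/∂x_1(x_1,…,x_n) ≠ 0 and f_0(x_1,…,x_n) = 0. Let d ≥ m ≥ 1, m' < m, let h_2 be a monic polynomial of degree m', and let g_j(T) = x_j T^d + (lower order terms) be polynomials of degree d with leading coefficients x_j. Then for every λ ∈ F, the polynomial F_λ(T) = f(g_1(T) + λ T^{d−m} h_2(T), g_2(T), …, g_n(T)) − f(g_1(T),…,g_n(T)) is divisible by h_2(T), and for λ ≠ 0 it has degree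 exactly d − m + m' + (k−1)d, with leading coefficient λ · (∂f_0/∂x_1)(x_1,…,x_n). -/
/-! Put `c = λ T^(d-m) h₂`. Only the first argument of `f` changes, and by `c`; as `h₂ ∣ c`, also
`h₂ ∣ F_λ`. To first order `F_λ = c · ∂₁f(g) + R`, where every monomial of the Taylor remainder `R`
carries `c²`; hence `deg R ≤ 2 deg c + (k-2)d`, which is below `deg c + (k-1)d` since
`deg c = d - m + m' < d`. The coefficient of `T^((k-1)d)` in `∂₁f(g)` is `∂₁f₀(x) ≠ 0`, the top
homogeneous part of `∂₁f` evaluated at the leading coefficients of the `g_j`. -/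

open Polynomial Finset

namespace Polynomial

variable {R : Type*}

section CommSemiring

variable [CommSemiring R] {ι : Type*} {d : ℕ}

theorem natDegree_prod_pow_le {s : Finset ι} {f : ι → R[X]} (hf : ∀ i ∈ s, (f i).natDegree ≤ d)
    (e : ι → ℕ) : (∏ i ∈ s, f i ^ e i).natDegree ≤ (∑ i ∈ s, e i) * d := by
  rw [sum_mul]
  exact (natDegree_prod_le s _).trans
    (sum_le_sum fun i hi => natDegree_pow_le_of_le _ (hf i hi))

theorem coeff_prod_pow_of_natDegree_le [DecidableEq ι] {s : Finset ι} {f : ι → R[X]}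
    (hf : ∀ i ∈ s, (f i).natDegree ≤ d) (e : ι → ℕ) :
    (∏ i ∈ s, f i ^ e i).coeff ((∑ i ∈ s, e i) * d) = ∏ i ∈ s, (f i).coeff d ^ e i := by
  induction s using Finset.induction_on with
  | empty => simp
  | insert a s ha ih =>
    have hfs : ∀ i ∈ s, (f i).natDegree ≤ d := fun i hi => hf i (mem_insert_of_mem hi)
    rw [prod_insert ha, prod_insert ha, sum_insert ha, add_mul,
      coeff_mul_add_eq_of_natDegree_le (natDegree_pow_le_of_le _ (hf a (mem_insert_self a s)))
        (natDegree_prod_pow_le hfs e),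
      coeff_pow_of_natDegree_le (hf a (mem_insert_self a s)), ih hfs]

end CommSemiring

theorem natDegree_add_pow_sub_pow_sub_le [CommRing R] {p q : R[X]} {d e : ℕ}
    (hp : p.natDegree ≤ d) (hq : q.natDegree ≤ e) (hed : e ≤ d) (N : ℕ) :
    ((p + q) ^ (N + 2) - p ^ (N + 2) - (N + 2 : R[X]) * q * p ^ (N + 1)).natDegree
      ≤ 2 * e + N * d := by
  have hexpand : (p + q) ^ (N + 2) - p ^ (N + 2) - (N + 2 : R[X]) * q * p ^ (N + 1)
      = ∑ m ∈ range (N + 1), q ^ (m + 2) * p ^ (N - m) * ((N + 2).choose (m + 2) : R[X]) := by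
    rw [add_comm p q, add_pow, sum_range_succ', sum_range_succ']
    simp only [zero_add, Nat.add_sub_add_right, Nat.choose_one_right, Nat.choose_zero_right]
    push_cast
    ring
  rw [hexpand]
  refine natDegree_sum_le_of_forall_le _ _ fun m hm => ?_
  have hmN : m ≤ N := Nat.lt_succ_iff.mp (mem_range.mp hm)
  calc _ ≤ (m + 2) * e + (N - m) * d :=
        natDegree_mul_le_of_le (natDegree_mul_le_of_le (natDegree_pow_le_of_le _ hq)
          (natDegree_pow_le_of_le _ hp)) (natDegree_natCast _).le |>.trans (by omega)
    _ ≤ 2 * e + (m + (N - m)) * d := by nlinarith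
    _ = 2 * e + N * d := by rw [Nat.add_sub_cancel' hmN]

end Polynomial

namespace MvPolynomial

variable {σ R A : Type*}

section CommSemiring

variable [CommSemiring R]

theorem totalDegree_pderiv_le (i : σ) (P : MvPolynomial σ R) :
    (pderiv i P).totalDegree ≤ P.totalDegree - 1 := by
  refine Finset.sup_le fun s hs => ?_
  have hmem : s + Finsupp.single i 1 ∈ P.support := by
    rw [mem_support_iff, coeff_pderiv] at hs
    exact mem_support_iff.mpr (left_ne_zero_of_mul hs)
  have hle : (s + Finsupp.single i 1).degree ≤ P.totalDegree := le_totalDegree hmem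
  rw [map_add, Finsupp.degree_single] at hle
  change s.degree ≤ _
  omega

theorem homogeneousComponent_pred_pderiv (i : σ) {k : ℕ} (hk : 1 ≤ k) (P : MvPolynomial σ R) :
    homogeneousComponent (k - 1) (pderiv i P) = pderiv i (homogeneousComponent k P) := by
  ext s
  rw [coeff_homogeneousComponent, coeff_pderiv, coeff_pderiv, coeff_homogeneousComponent,
    map_add, Finsupp.degree_single]
  by_cases h : s.degree = k - 1
  · rw [if_pos h, if_pos (by omega)]
  · rw [if_neg h, if_neg (by omega), zero_mul]

theorem natDegree_aeval_le {g : σ → R[X]} {d : ℕ} (hg : ∀ j, (g j).natDegree ≤ d)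
    (P : MvPolynomial σ R) : (aeval g P).natDegree ≤ P.totalDegree * d := by
  conv_lhs => rw [P.as_sum]
  rw [map_sum]
  refine natDegree_sum_le_of_forall_le _ _ fun s hs => ?_
  rw [aeval_monomial, Polynomial.algebraMap_eq]
  refine (natDegree_C_mul_le _ _).trans ((natDegree_prod_pow_le (fun j _ => hg j) s).trans ?_)
  exact Nat.mul_le_mul_right d (le_totalDegree hs)

theorem coeff_aeval_eq_eval_homogeneousComponent {g : σ → R[X]} {d : ℕ} (hd : 0 < d)
    (hg : ∀ j, (g j).natDegree ≤ d) {x : σ → R} (hgx : ∀ j, (g j).coeff d = x j)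
    {P : MvPolynomial σ R} {D : ℕ} (hP : P.totalDegree ≤ D) :
    (aeval g P).coeff (D * d) = eval x (homogeneousComponent D P) := by
  classical
  conv_lhs => rw [P.as_sum]
  rw [map_sum, finsetSum_coeff, homogeneousComponent_apply, map_sum, sum_filter]
  refine sum_congr rfl fun s hs => ?_
  rw [aeval_monomial, Polynomial.algebraMap_eq, Polynomial.coeff_C_mul, Finsupp.prod]
  split_ifs with hsD
  · rw [eval_monomial, ← hsD, Finsupp.degree_apply, coeff_prod_pow_of_natDegree_le fun j _ => hg j,
      Finsupp.prod]
    simp only [hgx]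
  · have hlt : s.degree * d < D * d :=
      Nat.mul_lt_mul_of_pos_right ((le_totalDegree hs).trans hP |>.lt_of_ne hsD) hd
    rw [coeff_eq_zero_of_natDegree_lt ((natDegree_prod_pow_le (fun j _ => hg j) s).trans_lt hlt),
      mul_zero]

theorem natDegree_aeval_eq_of_eval_ne_zero {g : σ → R[X]} {d : ℕ} (hd : 0 < d)
    (hg : ∀ j, (g j).natDegree ≤ d) {x : σ → R} (hgx : ∀ j, (g j).coeff d = x j)
    {P : MvPolynomial σ R} {D : ℕ} (hP : P.totalDegree ≤ D)
    (hne : eval x (homogeneousComponent D P) ≠ 0) : (aeval g P).natDegree = D * d :=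
  natDegree_eq_of_le_of_coeff_ne_zero ((natDegree_aeval_le hg P).trans (Nat.mul_le_mul_right d hP))
    (coeff_aeval_eq_eval_homogeneousComponent hd hg hgx hP ▸ hne)

theorem leadingCoeff_aeval_eq_of_eval_ne_zero {g : σ → R[X]} {d : ℕ} (hd : 0 < d)
    (hg : ∀ j, (g j).natDegree ≤ d) {x : σ → R} (hgx : ∀ j, (g j).coeff d = x j)
    {P : MvPolynomial σ R} {D : ℕ} (hP : P.totalDegree ≤ D)
    (hne : eval x (homogeneousComponent D P) ≠ 0) :
    (aeval g P).leadingCoeff = eval x (homogeneousComponent D P) := by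
  rw [leadingCoeff, natDegree_aeval_eq_of_eval_ne_zero hd hg hgx hP hne,
    coeff_aeval_eq_eval_homogeneousComponent hd hg hgx hP]

end CommSemiring

theorem dvd_aeval_sub_aeval [CommSemiring R] [CommRing A] [Algebra R A] {a : A} {u g : σ → A}
    (h : ∀ j, a ∣ u j - g j) (P : MvPolynomial σ R) : a ∣ aeval u P - aeval g P := by
  simp only [← Ideal.mem_span_singleton, ← Ideal.Quotient.eq] at h ⊢
  rw [← Ideal.Quotient.mkₐ_eq_mk R, comp_aeval_apply, comp_aeval_apply]
  simp only [Ideal.Quotient.mkₐ_eq_mk, h]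

section Taylor

variable [CommSemiring R] [CommRing A] [Algebra R A] [DecidableEq σ]

noncomputable def taylorRemainder (i : σ) (g : σ → A) (c : A) (P : MvPolynomial σ R) : A :=
  aeval (Function.update g i (g i + c)) P - aeval g P - c * aeval g (pderiv i P)

theorem taylorRemainder_monomial [Fintype σ] (i : σ) (g : σ → A) (c : A) (s : σ →₀ ℕ) (a : R) :
    taylorRemainder i g c (monomial s a) = algebraMap R A a * (∏ j ∈ {i}ᶜ, g j ^ s j) *
      ((g i + c) ^ s i - g i ^ s i - s i * c * g i ^ (s i - 1)) := by
  have hupdate : ∏ j ∈ {i}ᶜ, Function.update g i (g i + c) j ^ s j = ∏ j ∈ {i}ᶜ, g j ^ s j :=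
    prod_congr rfl fun j hj => by rw [Function.update_of_ne (by simpa using hj)]
  have hsub : ∏ j ∈ {i}ᶜ, g j ^ (s - Finsupp.single i 1 : σ →₀ ℕ) j = ∏ j ∈ {i}ᶜ, g j ^ s j :=
    prod_congr rfl fun j hj => by
      rw [Finsupp.tsub_apply, Finsupp.single_eq_of_ne (by simpa using hj), Nat.sub_zero]
  rw [taylorRemainder, pderiv_monomial, aeval_monomial, aeval_monomial, aeval_monomial,
    Finsupp.prod_pow, Finsupp.prod_pow, Finsupp.prod_pow,
    Fintype.prod_eq_mul_prod_compl i (fun j => Function.update g i (g i + c) j ^ s j),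
    Fintype.prod_eq_mul_prod_compl i (fun j => g j ^ s j),
    Fintype.prod_eq_mul_prod_compl i (fun j => g j ^ (s - Finsupp.single i 1 : σ →₀ ℕ) j),
    hupdate, hsub, Function.update_self]
  simp only [Finsupp.tsub_apply, Finsupp.single_eq_same, map_mul, map_natCast]
  ring

end Taylor

theorem natDegree_taylorRemainder_le [CommRing R] [Fintype σ] [DecidableEq σ] (i : σ)
    {g : σ → R[X]} {c : R[X]} {d e : ℕ} (hg : ∀ j, (g j).natDegree ≤ d) (hc : c.natDegree ≤ e)
    (hed : e ≤ d) (P : MvPolynomial σ R) :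
    (taylorRemainder i g c P).natDegree ≤ 2 * e + (P.totalDegree - 2) * d := by
  have hsum : taylorRemainder i g c P
      = ∑ s ∈ P.support, taylorRemainder i g c (monomial s (coeff s P)) := by
    conv_lhs => rw [P.as_sum]
    simp only [taylorRemainder, map_sum, mul_sum, sum_sub_distrib]
  rw [hsum]
  refine natDegree_sum_le_of_forall_le _ _ fun s hs => ?_
  rw [taylorRemainder_monomial, Polynomial.algebraMap_eq]
  obtain hsi | ⟨N, hN⟩ : s i ≤ 1 ∨ ∃ N, s i = N + 2 := by
    by_cases h : s i ≤ 1
    · exact .inl h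
    · exact .inr ⟨s i - 2, by omega⟩
  · obtain h | h : s i = 0 ∨ s i = 1 := by omega
    all_goals simp [h]
  · have hdeg : s i + ∑ j ∈ {i}ᶜ, s j ≤ P.totalDegree := by
      rw [← Fintype.sum_eq_add_sum_compl, ← Finsupp.degree_eq_sum]
      exact le_totalDegree hs
    rw [hN, show N + 2 - 1 = N + 1 by omega]
    push_cast
    refine (natDegree_mul_le_of_le (natDegree_mul_le_of_le (natDegree_C _).le
      (natDegree_prod_pow_le (fun j _ => hg j) s)) (natDegree_add_pow_sub_pow_sub_le (hg i) hc hed N)).trans ?_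
    have : (∑ j ∈ {i}ᶜ, s j + N) * d ≤ (P.totalDegree - 2) * d := Nat.mul_le_mul_right d (by omega)
    rw [add_mul] at this
    omega

end MvPolynomial

open MvPolynomial in
theorem stmt_16_general (F : Type) [Field F] (n k d m m' : ℕ) (hn : 1 ≤ n)
    (hk : 2 ≤ k) (hdm : m ≤ d) (hm' : m' < m)
    (f : MvPolynomial (Fin n) F) (hdeg : f.totalDegree = k)
    (x : Fin n → F)
    (h1 : MvPolynomial.eval x
        (MvPolynomial.pderiv (⟨0, hn⟩ : Fin n) (MvPolynomial.homogeneousComponent k f)) ≠ 0)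
    (h2 : Polynomial F) (hmon : h2.Monic) (hd2 : h2.natDegree = m')
    (g : Fin n → Polynomial F)
    (hgdeg : ∀ j, (g j).natDegree = d) (hglead : ∀ j, (g j).coeff d = x j)
    (lam : F) :
    h2 ∣ (MvPolynomial.aeval
            (Function.update g (⟨0, hn⟩ : Fin n)
              (g (⟨0, hn⟩ : Fin n) + Polynomial.C lam * Polynomial.X ^ (d - m) * h2)) f
          - MvPolynomial.aeval g f) ∧
    (lam ≠ 0 →
      (MvPolynomial.aeval
            (Function.update g (⟨0, hn⟩ : Fin n)
              (g (⟨0, hn⟩ : Fin n) + Polynomial.C lam * Polynomial.X ^ (d - m) * h2)) f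
          - MvPolynomial.aeval g f).natDegree = d - m + m' + (k - 1) * d ∧
      (MvPolynomial.aeval
            (Function.update g (⟨0, hn⟩ : Fin n)
              (g (⟨0, hn⟩ : Fin n) + Polynomial.C lam * Polynomial.X ^ (d - m) * h2)) f
          - MvPolynomial.aeval g f).leadingCoeff
        = lam * MvPolynomial.eval x
            (MvPolynomial.pderiv (⟨0, hn⟩ : Fin n) (MvPolynomial.homogeneousComponent k f))) := by
  set i : Fin n := ⟨0, hn⟩
  set c : F[X] := Polynomial.C lam * Polynomial.X ^ (d - m) * h2
  refine ⟨dvd_aeval_sub_aeval (fun j => ?_) f, fun hlam => ?_⟩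
  · rcases eq_or_ne j i with rfl | hj
    · rw [Function.update_self, add_sub_cancel_left]
      exact dvd_mul_left h2 _
    · simp [Function.update_of_ne hj]
  have hcX : Polynomial.C lam * Polynomial.X ^ (d - m) ≠ 0 := by simp [hlam]
  have hc_deg : c.natDegree = d - m + m' := by
    rw [natDegree_mul hcX hmon.ne_zero, natDegree_C_mul_X_pow _ _ hlam, hd2]
  have hc_lead : c.leadingCoeff = lam := by simp [c, hmon.leadingCoeff]
  have hd : 0 < d := by omega
  have hg : ∀ j, (g j).natDegree ≤ d := fun j => (hgdeg j).le
  have hP : (pderiv i f).totalDegree ≤ k - 1 := hdeg ▸ totalDegree_pderiv_le i f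
  have hne : eval x (homogeneousComponent (k - 1) (pderiv i f)) ≠ 0 := by
    rwa [homogeneousComponent_pred_pderiv i (by omega)]
  have hA_deg := natDegree_aeval_eq_of_eval_ne_zero hd hg hglead hP hne
  have hA_lead := leadingCoeff_aeval_eq_of_eval_ne_zero hd hg hglead hP hne
  rw [homogeneousComponent_pred_pderiv i (by omega)] at hA_lead
  have hA : aeval g (pderiv i f) ≠ 0 := fun h => h1 (by rw [← hA_lead, h, leadingCoeff_zero])
  have hcA_deg : (c * aeval g (pderiv i f)).natDegree = d - m + m' + (k - 1) * d := by
    rw [natDegree_mul (mul_ne_zero hcX hmon.ne_zero) hA, hc_deg, hA_deg]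
  have hR : (taylorRemainder i g c f).natDegree < (c * aeval g (pderiv i f)).natDegree := by
    have hbound := natDegree_taylorRemainder_le i hg hc_deg.le (by omega) f
    have hk_pred : (k - 1) * d = (k - 2) * d + d := by
      rw [← Nat.succ_mul]
      congr 1
      omega
    rw [hdeg] at hbound
    omega
  have hsplit : aeval (Function.update g i (g i + c)) f - aeval g f
      = c * aeval g (pderiv i f) + taylorRemainder i g c f := by
    rw [taylorRemainder]
    ring
  rw [hsplit]
  refine ⟨by rw [natDegree_add_eq_left_of_natDegree_lt hR, hcA_deg], ?_⟩
  rw [leadingCoeff_add_of_degree_lt' (degree_lt_degree hR), leadingCoeff_mul, hc_lead, hA_lead]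

/-- with f of degree k whose leading form f₀ satisfies f₀(x) = 0 and
∂f₀/∂x_1(x) ≠ 0, d ≥ m ≥ 1, m' < m, h₂ monic of degree m', and g_j of degree d with
leading coefficients x_j, the difference
F_λ = f(g_1 + λ T^{d−m} h₂, g_2, …, g_n) − f(g_1,…,g_n) is divisible by h₂, and for
λ ≠ 0 it has degree exactly d − m + m' + (k−1)d with leading coefficient
λ · ∂f₀/∂x_1(x). -/
theorem stmt_16 (F : Type) [Field F] (n k d m m' : ℕ) (hn : 1 ≤ n)
    (hk : 2 ≤ k) (hchar : ringChar F = 0 ∨ k < ringChar F)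
    (hm : 1 ≤ m) (hdm : m ≤ d) (hm' : m' < m)
    (f : MvPolynomial (Fin n) F) (hdeg : f.totalDegree = k)
    (x : Fin n → F)
    (h0 : MvPolynomial.eval x (MvPolynomial.homogeneousComponent k f) = 0)
    (h1 : MvPolynomial.eval x
        (MvPolynomial.pderiv (⟨0, hn⟩ : Fin n) (MvPolynomial.homogeneousComponent k f)) ≠ 0)
    (h2 : Polynomial F) (hmon : h2.Monic) (hd2 : h2.natDegree = m')
    (g : Fin n → Polynomial F)
    (hgdeg : ∀ j, (g j).natDegree = d) (hglead : ∀ j, (g j).coeff d = x j)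
    (lam : F) :
    h2 ∣ (MvPolynomial.aeval
            (Function.update g (⟨0, hn⟩ : Fin n)
              (g (⟨0, hn⟩ : Fin n) + Polynomial.C lam * Polynomial.X ^ (d - m) * h2)) f
          - MvPolynomial.aeval g f) ∧
    (lam ≠ 0 →
      (MvPolynomial.aeval
            (Function.update g (⟨0, hn⟩ : Fin n)
              (g (⟨0, hn⟩ : Fin n) + Polynomial.C lam * Polynomial.X ^ (d - m) * h2)) f
          - MvPolynomial.aeval g f).natDegree = d - m + m' + (k - 1) * d ∧
      (MvPolynomial.aeval
            (Function.update g (⟨0, hn⟩ : Fin n)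
              (g (⟨0, hn⟩ : Fin n) + Polynomial.C lam * Polynomial.X ^ (d - m) * h2)) f
          - MvPolynomial.aeval g f).leadingCoeff
        = lam * MvPolynomial.eval x
            (MvPolynomial.pderiv (⟨0, hn⟩ : Fin n) (MvPolynomial.homogeneousComponent k f))) :=
  stmt_16_general F n k d m m' hn hk hdm hm' f hdeg x h1 h2 hmon hd2 g hgdeg hglead lam
end
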